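/- arXiv:1007.2516 — 4 statements merged into one kernel-verified Lean document; each statement's English description precedes it below -/
import Mathlib

section
/- A continuous function f on [0,1]² with f(0,0) = f(s,0) = f(0,t) for all s,t ∈ [0,1] and of finite 2-dimensional p-variation with 0 < p < 1 is constant. -/
open Real

private lemma aux_rpow_bound (x δ p : ℝ) (hx : 0 ≤ x) (hxδ : x ≤ δ) (hp0 : 0 < p)
    (hp1 : p < 1) : x ≤ δ ^ (1 - p) * x ^ p := by
  rcases eq_or_lt_of_le hx with h | h
  · rw [← h, Real.zero_rpow hp0.ne', mul_zero]
  · calc x = x ^ p * x ^ (1 - p) := by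
          rw [← Real.rpow_add h, add_sub_cancel, Real.rpow_one]
      _ ≤ x ^ p * δ ^ (1 - p) :=
          mul_le_mul_of_nonneg_left (Real.rpow_le_rpow hx hxδ (by linarith))
            (Real.rpow_nonneg hx p)
      _ = δ ^ (1 - p) * x ^ p := mul_comm _ _

private lemma mono01 : Monotone (![0, 1] : Fin 2 → ℝ) := by
  intro i j hij; fin_cases i <;> fin_cases j <;> simp_all

private lemma mem01 : ∀ i : Fin 2, (![0, 1] : Fin 2 → ℝ) i ∈ Set.Icc (0:ℝ) 1 := by
  intro i; fin_cases i <;> norm_num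

private lemma mono0t1 (t : ℝ) (h0 : 0 ≤ t) (h1 : t ≤ 1) :
    Monotone (![0, t, 1] : Fin 3 → ℝ) := by
  intro i j hij; fin_cases i <;> fin_cases j <;> simp_all

private lemma mem0t1 (t : ℝ) (h0 : 0 ≤ t) (h1 : t ≤ 1) :
    ∀ j : Fin 3, (![0, t, 1] : Fin 3 → ℝ) j ∈ Set.Icc (0:ℝ) 1 := by
  intro j; fin_cases j <;> constructor <;> simp_all

set_option maxHeartbeats 2000000 in
/-- A continuous function `f` on `[0,1]²` with `f(0,0) = f(s,0) = f(0,t)` for all `s, t` and of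
finite 2-dimensional `p`-variation with `0 < p < 1` is constant. -/
theorem constant_of_finite_p_variation2_lt_one
    (f : ℝ → ℝ → ℝ)
    (hf : ContinuousOn (fun x : ℝ × ℝ => f x.1 x.2) (Set.Icc 0 1 ×ˢ Set.Icc 0 1))
    (hside : ∀ s ∈ Set.Icc (0:ℝ) 1, ∀ t ∈ Set.Icc (0:ℝ) 1,
      f s 0 = f 0 0 ∧ f 0 t = f 0 0)
    (p : ℝ) (hp0 : 0 < p) (hp1 : p < 1)
    (hvar : ∃ C : ℝ, ∀ (n m : ℕ) (t : Fin (n + 1) → ℝ) (u : Fin (m + 1) → ℝ),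
      Monotone t → t 0 = 0 → t (Fin.last n) = 1 →
      Monotone u → u 0 = 0 → u (Fin.last m) = 1 →
      (∀ i, t i ∈ Set.Icc (0:ℝ) 1) → (∀ j, u j ∈ Set.Icc (0:ℝ) 1) →
      ∑ i : Fin n, ∑ j : Fin m,
        |f (t i.succ) (u j.succ) - f (t i.succ) (u j.castSucc)
          - f (t i.castSucc) (u j.succ) + f (t i.castSucc) (u j.castSucc)| ^ p ≤ C) :
    ∀ s ∈ Set.Icc (0:ℝ) 1, ∀ t ∈ Set.Icc (0:ℝ) 1,
      ∀ s' ∈ Set.Icc (0:ℝ) 1, ∀ t' ∈ Set.Icc (0:ℝ) 1, f s t = f s' t' := by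
  obtain ⟨C, hC⟩ := hvar
  have h01 : (0:ℝ) ∈ Set.Icc (0:ℝ) 1 := ⟨le_refl 0, zero_le_one⟩
  have h11 : (1:ℝ) ∈ Set.Icc (0:ℝ) 1 := ⟨zero_le_one, le_refl 1⟩
  -- C is nonnegative
  have hC0 : 0 ≤ C := by
    have h := hC 1 1 ![0, 1] ![0, 1] mono01 rfl rfl mono01 rfl rfl mem01 mem01
    refine le_trans ?_ h
    rw [Fin.sum_univ_one, Fin.sum_univ_one]
    positivity
  have key : ∀ s ∈ Set.Icc (0:ℝ) 1, ∀ t ∈ Set.Icc (0:ℝ) 1, f s t = f 0 0 := by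
    intro s hs t ht
    set g : ℝ → ℝ := fun x => f x t - f 0 0 with hgdef
    have hgcont : ContinuousOn g (Set.Icc 0 1) := by
      apply ContinuousOn.sub _ continuousOn_const
      exact hf.comp (Continuous.continuousOn (by continuity : Continuous fun x : ℝ => (x, t)))
        (fun x hx => ⟨hx, ht⟩)
    have hg0 : g 0 = 0 := by simp [hgdef, (hside 0 h01 t ht).2]
    have main : ∀ δ > (0:ℝ), |g s| ≤ δ ^ (1 - p) * C := by
      intro δ hδ
      obtain ⟨η, hη, hmod⟩ := Metric.uniformContinuousOn_iff.mp
        (isCompact_Icc.uniformContinuousOn_of_continuous hgcont) δ hδ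
      obtain ⟨n, hn⟩ := exists_nat_gt (s / η)
      have hnpos : 0 < n := by
        rcases Nat.eq_zero_or_pos n with h | h
        · subst h
          norm_num at hn
          have : 0 ≤ s / η := div_nonneg hs.1 hη.le
          linarith
        · exact h
      have hn0 : (0:ℝ) < n := by exact_mod_cast hnpos
      have hsn : s / n < η := by
        rw [div_lt_iff₀ hn0]
        rw [div_lt_iff₀ hη] at hn
        linarith
      have hfrac_le : ∀ m : ℕ, m ≤ n → (m:ℝ) * s / n ≤ s := by
        intro m hm
        rw [div_le_iff₀ hn0]
        have : (m:ℝ) ≤ n := by exact_mod_cast hm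
        nlinarith [hs.1]
      have hfrac_nonneg : ∀ m : ℕ, 0 ≤ (m:ℝ) * s / n := by
        intro m; have := hs.1; positivity
      have hfrac_mem : ∀ m : ℕ, m ≤ n → (m:ℝ) * s / n ∈ Set.Icc (0:ℝ) 1 :=
        fun m hm => ⟨hfrac_nonneg m, le_trans (hfrac_le m hm) hs.2⟩
      set T : Fin (n + 1 + 1) → ℝ := fun i => if (i : ℕ) ≤ n then (i : ℕ) * s / n else 1
        with hTdef
      have hTval_le : ∀ i : Fin (n + 1 + 1), (i : ℕ) ≤ n → T i = (i : ℕ) * s / n := by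
        intro i hi; simp [hTdef, hi]
      have hTmono : Monotone T := by
        intro i j hij
        have hij' : (i : ℕ) ≤ (j : ℕ) := hij
        by_cases hj : (j : ℕ) ≤ n
        · have hi : (i : ℕ) ≤ n := le_trans hij' hj
          simp only [hTdef, if_pos hi, if_pos hj]
          have : (i:ℝ) * s ≤ (j:ℝ) * s :=
            mul_le_mul_of_nonneg_right (by exact_mod_cast hij') hs.1
          exact div_le_div_of_nonneg_right this hn0.le  -- may need rename
        · by_cases hi : (i : ℕ) ≤ n
          · simp only [hTdef, if_pos hi, if_neg hj]
            exact le_trans (hfrac_le _ hi) hs.2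
          · simp [hTdef, hi, hj]
      have hT0 : T 0 = 0 := by simp [hTdef]
      have hTlast : T (Fin.last (n + 1)) = 1 := by
        simp [hTdef, Fin.last]
      have hTmem : ∀ i, T i ∈ Set.Icc (0:ℝ) 1 := by
        intro i
        by_cases hi : (i : ℕ) ≤ n
        · rw [hTval_le i hi]; exact hfrac_mem _ hi
        · simp [hTdef, hi]
      set U : Fin 3 → ℝ := ![0, t, 1] with hUdef
      have hUmono : Monotone U := mono0t1 t ht.1 ht.2
      have hU0 : U 0 = 0 := rfl
      have hUlast : U (Fin.last 2) = 1 := rfl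
      have hUmem : ∀ j, U j ∈ Set.Icc (0:ℝ) 1 := mem0t1 t ht.1 ht.2
      have hsum := hC (n + 1) 2 T U hTmono hT0 hTlast hUmono hU0 hUlast hTmem hUmem
      -- extract the j = 0 terms
      set b : Fin (n + 1) → ℝ := fun i => |g (T i.succ) - g (T i.castSucc)| ^ p with hbdef
      have hb_nonneg : ∀ i, 0 ≤ b i := fun i => Real.rpow_nonneg (abs_nonneg _) p
      have hbC : ∑ i : Fin (n + 1), b i ≤ C := by
        refine le_trans (Finset.sum_le_sum ?_) hsum
        intro i _
        rw [Fin.sum_univ_two]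
        have hterm : b i = |f (T i.succ) (U (0:Fin 2).succ) - f (T i.succ) (U (0:Fin 2).castSucc)
            - f (T i.castSucc) (U (0:Fin 2).succ) + f (T i.castSucc) (U (0:Fin 2).castSucc)| ^ p := by
          have h1 := (hside (T i.succ) (hTmem _) t ht).1
          have h2 := (hside (T i.castSucc) (hTmem _) t ht).1
          have e1 : U (0:Fin 2).succ = t := rfl
          have e2 : U (0:Fin 2).castSucc = 0 := rfl
          rw [e1, e2, h1, h2, hbdef]
          congr 1
          simp [hgdef]
          ring
        rw [← hterm]
        have : (0:ℝ) ≤ |f (T i.succ) (U (1:Fin 2).succ) - f (T i.succ) (U (1:Fin 2).castSucc)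
            - f (T i.castSucc) (U (1:Fin 2).succ) + f (T i.castSucc) (U (1:Fin 2).castSucc)| ^ p :=
          Real.rpow_nonneg (abs_nonneg _) p
        linarith
      -- telescoping
      have htel : g s = ∑ k ∈ Finset.range n, (g ((k + 1 : ℕ) * s / n) - g ((k:ℕ) * s / n)) := by
        rw [Finset.sum_range_sub (fun k => g ((k:ℕ) * s / n)) n]
        have : (n:ℝ) * s / n = s := by field_simp
        rw [this]
        simp [hg0]
      have hd_le : ∀ k ∈ Finset.range n, |g ((k + 1 : ℕ) * s / n) - g ((k:ℕ) * s / n)| ≤ δ := by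
        intro k hk
        have hk' : k < n := Finset.mem_range.mp hk
        have hx := hfrac_mem (k + 1) hk'
        have hy := hfrac_mem k hk'.le
        have hdist : dist ((k + 1 : ℕ) * s / n : ℝ) ((k:ℕ) * s / n : ℝ) < η := by
          rw [Real.dist_eq]
          have : ((k + 1 : ℕ) : ℝ) * s / n - (k:ℕ) * s / n = s / n := by
            push_cast; ring
          rw [this, abs_of_nonneg (div_nonneg hs.1 hn0.le)]
          exact hsn
        have := hmod _ hx _ hy hdist
        rw [Real.dist_eq] at this
        exact this.le
      have hsum_p : ∑ k ∈ Finset.range n, |g ((k + 1 : ℕ) * s / n) - g ((k:ℕ) * s / n)| ^ p ≤ C := by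
        refine le_trans ?_ hbC
        rw [Fin.sum_univ_castSucc]
        have heq : ∑ i : Fin n, b i.castSucc
            = ∑ k ∈ Finset.range n, |g ((k + 1 : ℕ) * s / n) - g ((k:ℕ) * s / n)| ^ p := by
          rw [Finset.sum_range fun k => |g ((k + 1 : ℕ) * s / n) - g ((k:ℕ) * s / n)| ^ p]
          apply Finset.sum_congr rfl
          intro i _
          have hsv : ((i.castSucc.succ : Fin (n+1+1)) : ℕ) = (i : ℕ) + 1 := rfl
          have hcv : ((i.castSucc.castSucc : Fin (n+1+1)) : ℕ) = (i : ℕ) := rfl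
          rw [hbdef]
          simp only
          rw [hTval_le _ (by rw [hsv]; omega), hTval_le _ (by rw [hcv]; omega), hsv, hcv]
        rw [heq]
        have := hb_nonneg (Fin.last n)
        linarith
      calc |g s| ≤ ∑ k ∈ Finset.range n, |g ((k + 1 : ℕ) * s / n) - g ((k:ℕ) * s / n)| := by
              rw [htel]; exact Finset.abs_sum_le_sum_abs _ _
        _ ≤ ∑ k ∈ Finset.range n, δ ^ (1 - p) * |g ((k + 1 : ℕ) * s / n) - g ((k:ℕ) * s / n)| ^ p := by
              refine Finset.sum_le_sum ?_
              intro k hk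
              exact aux_rpow_bound _ _ _ (abs_nonneg _) (hd_le k hk) hp0 hp1
        _ = δ ^ (1 - p) * ∑ k ∈ Finset.range n, |g ((k + 1 : ℕ) * s / n) - g ((k:ℕ) * s / n)| ^ p := by
              rw [Finset.mul_sum]
        _ ≤ δ ^ (1 - p) * C := by
              exact mul_le_mul_of_nonneg_left hsum_p (Real.rpow_nonneg hδ.le _)
    -- conclude g s = 0
    by_contra hne
    have hgs : 0 < |g s| := by
      rw [abs_pos, hgdef]
      intro h
      apply hne
      linarith [sub_eq_zero.mp h]
    set a := |g s| with hadef
    set δ := (a / (2 * (C + 1))) ^ (1 - p)⁻¹ with hδdef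
    have hbase : 0 < a / (2 * (C + 1)) := by positivity
    have hδpos : 0 < δ := Real.rpow_pos_of_pos hbase _
    have hδpow : δ ^ (1 - p) = a / (2 * (C + 1)) := by
      rw [hδdef, Real.rpow_inv_rpow hbase.le (by linarith)]
    have := main δ hδpos
    rw [hδpow] at this
    have hD : (0:ℝ) < 2 * (C + 1) := by linarith
    rw [div_mul_eq_mul_div, le_div_iff₀ hD] at this
    nlinarith
  intro s hs t ht s' hs' t' ht'
  rw [key s hs t ht, key s' hs' t' ht']
end

section
/- If ω₁ and ω₂ are 2-dimensional control maps on the same rectangle and p, q > 0 satisfy 1/p + 1/q ≥ 1, then ω₁^{1/p} · ω₂^{1/q} is also a 2-dimensional control map (i.e., it is superadditive in each variable and vanishes as the corresponding interval degenerates). -/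
open Real Filter

/-- `ω` is a 2-dimensional control map on the rectangles contained in `[0,1]²`:
`ω s t u v` stands for `ω([s,t] × [u,v])`; it is nonnegative, superadditive in each variable
and vanishes as the corresponding interval degenerates. -/
structure IsControl2 (ω : ℝ → ℝ → ℝ → ℝ → ℝ) : Prop where
  nonneg : ∀ s t u v : ℝ, 0 ≤ s → s ≤ t → t ≤ 1 → 0 ≤ u → u ≤ v → v ≤ 1 →
    0 ≤ ω s t u v
  superadd_fst : ∀ r s t u v : ℝ, 0 ≤ r → r ≤ s → s ≤ t → t ≤ 1 →
    0 ≤ u → u ≤ v → v ≤ 1 →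
    ω r s u v + ω s t u v ≤ ω r t u v
  superadd_snd : ∀ u v r s t : ℝ, 0 ≤ u → u ≤ v → v ≤ 1 →
    0 ≤ r → r ≤ s → s ≤ t → t ≤ 1 →
    ω u v r s + ω u v s t ≤ ω u v r t
  vanish_fst : ∀ t u v : ℝ, 0 ≤ t → t ≤ 1 → 0 ≤ u → u ≤ v → v ≤ 1 →
    Tendsto (fun s => ω s t u v) (nhdsWithin t (Set.Iio t)) (nhds 0)
  vanish_snd : ∀ u v t : ℝ, 0 ≤ u → u ≤ v → v ≤ 1 → 0 ≤ t → t ≤ 1 →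
    Tendsto (fun s => ω u v s t) (nhdsWithin t (Set.Iio t)) (nhds 0)

/-!
Superadditivity of `ω₁^α ω₂^β` with `α = 1/p`, `β = 1/q` reduces to the two-term inequality
`a^α b^β + c^α d^β ≤ (a + c)^α (b + d)^β`. For `α + β = 1` this is Hölder's inequality with the
conjugate exponents `1/α, 1/β`. For `σ = α + β ≥ 1`, write `a^α b^β = (a^(α/σ) b^(β/σ))^σ`, apply
the case `α + β = 1` to the exponents `α/σ, β/σ`, and use superadditivity of `x ↦ x^σ`.
-/

theorem rpow_mul_rpow_add_rpow_mul_rpow_le_of_add_eq_one {α β : ℝ} (hα : 0 < α) (hβ : 0 < β)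
    (hαβ : α + β = 1) {a b c d : ℝ} (ha : 0 ≤ a) (hb : 0 ≤ b) (hc : 0 ≤ c) (hd : 0 ≤ d) :
    a ^ α * b ^ β + c ^ α * d ^ β ≤ (a + c) ^ α * (b + d) ^ β := by
  have holder := inner_le_Lp_mul_Lq_of_nonneg Finset.univ (.inv_inv hα hβ hαβ)
    (f := ![a ^ α, c ^ α]) (g := ![b ^ β, d ^ β])
    (by simpa [Fin.forall_fin_two] using ⟨rpow_nonneg ha α, rpow_nonneg hc α⟩)
    (by simpa [Fin.forall_fin_two] using ⟨rpow_nonneg hb β, rpow_nonneg hd β⟩)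
  simpa [Fin.sum_univ_two, ← rpow_mul, ha, hb, hc, hd, hα.ne', hβ.ne'] using holder

theorem rpow_mul_rpow_add_rpow_mul_rpow_le {α β : ℝ} (hα : 0 < α) (hβ : 0 < β)
    (hαβ : 1 ≤ α + β) {a b c d : ℝ} (ha : 0 ≤ a) (hb : 0 ≤ b) (hc : 0 ≤ c) (hd : 0 ≤ d) :
    a ^ α * b ^ β + c ^ α * d ^ β ≤ (a + c) ^ α * (b + d) ^ β := by
  set σ := α + β
  have hσ : 0 < σ := by positivity
  have hpow : ∀ {x y : ℝ}, 0 ≤ x → 0 ≤ y → (x ^ (α / σ) * y ^ (β / σ)) ^ σ = x ^ α * y ^ β := by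
    intro x y hx hy
    rw [mul_rpow (by positivity) (by positivity), ← rpow_mul hx, ← rpow_mul hy,
      div_mul_cancel₀ _ hσ.ne', div_mul_cancel₀ _ hσ.ne']
  have hnormalized : α / σ + β / σ = 1 := by rw [← add_div, div_self hσ.ne']
  calc a ^ α * b ^ β + c ^ α * d ^ β
      = (a ^ (α / σ) * b ^ (β / σ)) ^ σ + (c ^ (α / σ) * d ^ (β / σ)) ^ σ := by
        rw [hpow ha hb, hpow hc hd]
    _ ≤ (a ^ (α / σ) * b ^ (β / σ) + c ^ (α / σ) * d ^ (β / σ)) ^ σ :=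
        add_rpow_le_rpow_add (by positivity) (by positivity) hαβ
    _ ≤ ((a + c) ^ (α / σ) * (b + d) ^ (β / σ)) ^ σ := by
        gcongr
        exact rpow_mul_rpow_add_rpow_mul_rpow_le_of_add_eq_one (by positivity) (by positivity)
          hnormalized ha hb hc hd
    _ = (a + c) ^ α * (b + d) ^ β := hpow (by positivity) (by positivity)

theorem rpow_mul_rpow_add_rpow_mul_rpow_le_of_add_le {α β : ℝ} (hα : 0 < α) (hβ : 0 < β)
    (hαβ : 1 ≤ α + β) {a b c d e f : ℝ} (ha : 0 ≤ a) (hb : 0 ≤ b) (hc : 0 ≤ c) (hd : 0 ≤ d)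
    (hace : a + c ≤ e) (hbdf : b + d ≤ f) :
    a ^ α * b ^ β + c ^ α * d ^ β ≤ e ^ α * f ^ β :=
  (rpow_mul_rpow_add_rpow_mul_rpow_le hα hβ hαβ ha hb hc hd).trans <| by
    have he : 0 ≤ e := (add_nonneg ha hc).trans hace
    gcongr

theorem Filter.Tendsto.rpow_mul_rpow_of_tendsto_zero {X : Type*} {l : Filter X} {f g : X → ℝ}
    {m α β : ℝ} (hf : Tendsto f l (nhds 0)) (hg : Tendsto g l (nhds m)) (hα : 0 < α)
    (hβ : 0 ≤ β) : Tendsto (fun x => f x ^ α * g x ^ β) l (nhds 0) := by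
  simpa [zero_rpow hα.ne'] using (hf.rpow_const (.inr hα.le)).mul (hg.rpow_const (.inr hβ))

/-- If `ω₁, ω₂` are 2-dimensional control maps on the same rectangle and `p, q > 0` with
`1/p + 1/q ≥ 1`, then `ω₁^{1/p} ω₂^{1/q}` is again a 2-dimensional control map. -/
theorem isControl2_rpow_mul (ω₁ ω₂ : ℝ → ℝ → ℝ → ℝ → ℝ)
    (h₁ : IsControl2 ω₁) (h₂ : IsControl2 ω₂)
    (p q : ℝ) (hp : 0 < p) (hq : 0 < q) (hpq : 1 ≤ 1 / p + 1 / q) :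
    IsControl2 (fun s t u v => ω₁ s t u v ^ (1 / p) * ω₂ s t u v ^ (1 / q)) := by
  have hα : 0 < 1 / p := by positivity
  have hβ : 0 < 1 / q := by positivity
  refine ⟨fun s t u v hs hst ht hu huv hv => ?_, fun r s t u v hr hrs hst ht hu huv hv => ?_,
    fun u v r s t hu huv hv hr hrs hst ht => ?_, fun t u v ht ht₁ hu huv hv => ?_,
    fun u v t hu huv hv ht ht₁ => ?_⟩
  · exact mul_nonneg (rpow_nonneg (h₁.nonneg s t u v hs hst ht hu huv hv) _)
      (rpow_nonneg (h₂.nonneg s t u v hs hst ht hu huv hv) _)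
  · exact rpow_mul_rpow_add_rpow_mul_rpow_le_of_add_le hα hβ hpq
      (h₁.nonneg r s u v hr hrs (hst.trans ht) hu huv hv)
      (h₂.nonneg r s u v hr hrs (hst.trans ht) hu huv hv)
      (h₁.nonneg s t u v (hr.trans hrs) hst ht hu huv hv)
      (h₂.nonneg s t u v (hr.trans hrs) hst ht hu huv hv)
      (h₁.superadd_fst r s t u v hr hrs hst ht hu huv hv)
      (h₂.superadd_fst r s t u v hr hrs hst ht hu huv hv)
  · exact rpow_mul_rpow_add_rpow_mul_rpow_le_of_add_le hα hβ hpq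
      (h₁.nonneg u v r s hu huv hv hr hrs (hst.trans ht))
      (h₂.nonneg u v r s hu huv hv hr hrs (hst.trans ht))
      (h₁.nonneg u v s t hu huv hv (hr.trans hrs) hst ht)
      (h₂.nonneg u v s t hu huv hv (hr.trans hrs) hst ht)
      (h₁.superadd_snd u v r s t hu huv hv hr hrs hst ht)
      (h₂.superadd_snd u v r s t hu huv hv hr hrs hst ht)
  · exact (h₁.vanish_fst t u v ht ht₁ hu huv hv).rpow_mul_rpow_of_tendsto_zero
      (h₂.vanish_fst t u v ht ht₁ hu huv hv) hα hβ.le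
  · exact (h₁.vanish_snd u v t hu huv hv ht ht₁).rpow_mul_rpow_of_tendsto_zero
      (h₂.vanish_snd u v t hu huv hv ht ht₁) hα hβ.le
end

section
/- The covariance function R_H(s,t) = ½(s^{2H} + t^{2H} − |s−t|^{2H}) of fractional Brownian motion with Hurst parameter H ∈ (0, 1/2] has finite 2-dimensional (1/(2H))-variation on [0,1]². -/
/-!
Fix a column `[a, b]` of the grid. The rectangular increments of `R_H` over `[a, b] × [x, y]` are
half the increments of `h(x) = |x - a|^{2H} - |x - b|^{2H}` over `[x, y]`. Since `x ↦ x^{2H}` is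
concave, `h` decreases on `[0, a]`, increases on `[a, b]` and decreases on `[b, 1]`, so its total
variation on `[0, 1]` is at most `4 (b - a)^{2H}`. Hence the increments in one column have absolute
sum at most `2 (b - a)^{2H}`; as `p = 1/(2H) ≥ 1`, their `p`-th powers sum to at most
`2^p (b - a)`, and summing over the columns gives the bound `2^p`.
-/

open Real Set

namespace Fin

theorem sum_univ_eq_sum_range_clamp {M : Type*} [AddCommMonoid M] {m : ℕ}
    (g : Fin (m + 1) → Fin (m + 1) → M) :
    ∑ j : Fin m, g j.succ j.castSucc = ∑ k ∈ Finset.range m, g (clamp (k + 1) m) (clamp k m) := by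
  rw [← Fin.sum_univ_eq_sum_range]
  refine Finset.sum_congr rfl fun j _ => ?_
  congr 1 <;> ext <;> simp [clamp]

theorem sum_succ_sub_castSucc {G : Type*} [AddCommGroup G] {m : ℕ} (f : Fin (m + 1) → G) :
    ∑ j : Fin m, (f j.succ - f j.castSucc) = f (last m) - f 0 := by
  rw [sum_univ_eq_sum_range_clamp (fun i j => f i - f j), Finset.sum_range_sub (f <| clamp · m),
    clamp_eq_last m m le_rfl]
  rfl

end Fin

theorem eVariationOn.sum_fin_le {α E : Type*} [LinearOrder α] [PseudoEMetricSpace E] (f : α → E)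
    {s : Set α} {m : ℕ} {u : Fin (m + 1) → α} (hu : Monotone u) (us : ∀ j, u j ∈ s) :
    ∑ j : Fin m, edist (f (u j.succ)) (f (u j.castSucc)) ≤ eVariationOn f s := by
  rw [Fin.sum_univ_eq_sum_range_clamp fun i j => edist (f (u i)) (f (u j))]
  exact sum_le (hu.comp Fin.clamp_monotone) fun k => us _

theorem sum_abs_sub_le_of_eVariationOn_le {α : Type*} [LinearOrder α] {f : α → ℝ} {s : Set α}
    {V : ℝ} (hV0 : 0 ≤ V) (hV : eVariationOn f s ≤ ENNReal.ofReal V) {m : ℕ}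
    {u : Fin (m + 1) → α} (hu : Monotone u) (us : ∀ j, u j ∈ s) :
    ∑ j : Fin m, |f (u j.succ) - f (u j.castSucc)| ≤ V := by
  rw [← ENNReal.ofReal_le_ofReal_iff hV0,
    ENNReal.ofReal_sum_of_nonneg fun j _ => abs_nonneg _]
  simp_rw [← Real.dist_eq, ← edist_dist]
  exact (eVariationOn.sum_fin_le f hu us).trans hV

theorem eVariationOn_neg {α E : Type*} [LinearOrder α] [SeminormedAddCommGroup E] (f : α → E)
    (s : Set α) : eVariationOn (fun x => -f x) s = eVariationOn f s := by
  simp only [eVariationOn, edist_neg_neg]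

theorem AntitoneOn.eVariationOn_eq {α : Type*} [LinearOrder α] {f : α → ℝ} {s : Set α} {a b : α}
    (hf : AntitoneOn f s) (as : a ∈ s) (bs : b ∈ s) :
    eVariationOn f (s ∩ Icc a b) = ENNReal.ofReal (f a - f b) := by
  rw [← eVariationOn_neg, hf.neg.eVariationOn_eq as bs, neg_sub_neg]

theorem Real.sum_rpow_le_rpow_sum {ι : Type*} (s : Finset ι) {p : ℝ} (hp : 1 ≤ p) {f : ι → ℝ}
    (hf : ∀ i ∈ s, 0 ≤ f i) : ∑ i ∈ s, f i ^ p ≤ (∑ i ∈ s, f i) ^ p := by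
  classical
  induction s using Finset.cons_induction with
  | empty => simp [zero_rpow (by linarith : p ≠ 0)]
  | cons a s ha ih =>
    rw [Finset.forall_mem_cons] at hf
    rw [Finset.sum_cons, Finset.sum_cons]
    calc f a ^ p + ∑ i ∈ s, f i ^ p ≤ f a ^ p + (∑ i ∈ s, f i) ^ p := by gcongr; exact ih hf.2
      _ ≤ (f a + ∑ i ∈ s, f i) ^ p :=
        add_rpow_le_rpow_add hf.1 (Finset.sum_nonneg hf.2) hp

theorem ConcaveOn.map_add_sub_map_anti {s : Set ℝ} {f : ℝ → ℝ} (hf : ConcaveOn ℝ s f) {x y d : ℝ}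
    (hx : x ∈ s) (hyd : y + d ∈ s) (hxy : x ≤ y) (hd : 0 ≤ d) :
    f (y + d) - f y ≤ f (x + d) - f x := by
  rcases (add_nonneg (sub_nonneg.2 hxy) hd).eq_or_lt with hL | hL
  · obtain ⟨rfl, rfl⟩ : y = x ∧ d = 0 := by constructor <;> linarith
    rfl
  set L := y - x + d
  have hL0 : L ≠ 0 := hL.ne'
  -- `y` and `x + d` are the convex combinations of `x` and `y + d` with swapped weights.
  have hy := hf.2 hx hyd (div_nonneg hd hL.le) (div_nonneg (sub_nonneg.2 hxy) hL.le)
    (by field_simp; ring)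
  have hxd := hf.2 hx hyd (div_nonneg (sub_nonneg.2 hxy) hL.le) (div_nonneg hd hL.le)
    (by field_simp; ring)
  simp only [smul_eq_mul] at hy hxd
  rw [show d / L * x + (y - x) / L * (y + d) = y by field_simp; ring] at hy
  rw [show (y - x) / L * x + d / L * (y + d) = x + d by field_simp; ring] at hxd
  have hsum : d / L * f x + (y - x) / L * f (y + d) + ((y - x) / L * f x + d / L * f (y + d))
      = f x + f (y + d) := by field_simp; ring
  linarith

noncomputable def distPowDiff (q a b x : ℝ) : ℝ := |x - a| ^ q - |x - b| ^ q

section distPowDiff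

variable {q a b : ℝ}

theorem distPowDiff_antitoneOn_Iic (hq0 : 0 ≤ q) (hq1 : q ≤ 1) (hab : a ≤ b) :
    AntitoneOn (distPowDiff q a b) (Iic a) := by
  intro x (hx : x ≤ a) y (hy : y ≤ a) hxy
  have h := (concaveOn_rpow hq0 hq1).map_add_sub_map_anti (x := a - y) (y := a - x)
    (d := b - a) (mem_Ici.2 (sub_nonneg.2 hy)) (mem_Ici.2 (by linarith)) (by linarith)
    (sub_nonneg.2 hab)
  simp only [distPowDiff, abs_of_nonpos (sub_nonpos.2 hx), abs_of_nonpos (sub_nonpos.2 hy),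
    abs_of_nonpos (sub_nonpos.2 (hx.trans hab)), abs_of_nonpos (sub_nonpos.2 (hy.trans hab)),
    neg_sub]
  rw [show a - x + (b - a) = b - x by ring, show a - y + (b - a) = b - y by ring] at h
  linarith

theorem distPowDiff_monotoneOn_Icc (hq0 : 0 ≤ q) : MonotoneOn (distPowDiff q a b) (Icc a b) := by
  intro x hx y hy hxy
  simp only [distPowDiff, abs_of_nonneg (sub_nonneg.2 hx.1), abs_of_nonneg (sub_nonneg.2 hy.1),
    abs_of_nonpos (sub_nonpos.2 hx.2), abs_of_nonpos (sub_nonpos.2 hy.2), neg_sub]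
  gcongr <;> linarith [hx.1, hy.2]

theorem distPowDiff_antitoneOn_Ici (hq0 : 0 ≤ q) (hq1 : q ≤ 1) (hab : a ≤ b) :
    AntitoneOn (distPowDiff q a b) (Ici b) := by
  intro x (hx : b ≤ x) y (hy : b ≤ y) hxy
  have h := (concaveOn_rpow hq0 hq1).map_add_sub_map_anti (x := x - b) (y := y - b)
    (d := b - a) (mem_Ici.2 (sub_nonneg.2 hx)) (mem_Ici.2 (by linarith)) (by linarith)
    (sub_nonneg.2 hab)
  simp only [distPowDiff, abs_of_nonneg (sub_nonneg.2 hx), abs_of_nonneg (sub_nonneg.2 hy),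
    abs_of_nonneg (sub_nonneg.2 (hab.trans hx)), abs_of_nonneg (sub_nonneg.2 (hab.trans hy))]
  rw [show x - b + (b - a) = x - a by ring, show y - b + (b - a) = y - a by ring] at h
  linarith

theorem eVariationOn_distPowDiff_le (hq0 : 0 < q) (hq1 : q ≤ 1) {c e : ℝ} (hca : c ≤ a)
    (hab : a ≤ b) (hbe : b ≤ e) :
    eVariationOn (distPowDiff q a b) (Icc c e) ≤ ENNReal.ofReal (4 * (b - a) ^ q) := by
  set h := distPowDiff q a b
  have hδ : 0 ≤ (b - a) ^ q := by positivity
  have ha : h a = -(b - a) ^ q := by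
    simp [h, distPowDiff, abs_of_nonpos (sub_nonpos.2 hab), zero_rpow hq0.ne']
  have hb : h b = (b - a) ^ q := by
    simp [h, distPowDiff, abs_of_nonneg (sub_nonneg.2 hab), zero_rpow hq0.ne']
  have hc : h c ≤ 0 := by
    simp only [h, distPowDiff, abs_sub_comm c, abs_of_nonneg (sub_nonneg.2 hca),
      abs_of_nonneg (sub_nonneg.2 (hca.trans hab)), sub_nonpos]
    gcongr
  have he : 0 ≤ h e := by
    simp only [h, distPowDiff, abs_of_nonneg (sub_nonneg.2 hbe),
      abs_of_nonneg (sub_nonneg.2 (hab.trans hbe)), sub_nonneg]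
    gcongr
  have split := fun {x y z : ℝ} (hxy : x ≤ y) (hyz : y ≤ z) =>
    eVariationOn.Icc_add_Icc h hxy hyz (mem_univ y)
  simp only [univ_inter] at split
  have piece₁ : eVariationOn h (Icc c a) = ENNReal.ofReal (h c - h a) := by
    simpa using ((distPowDiff_antitoneOn_Iic hq0.le hq1 hab).mono Icc_subset_Iic_self
      |>.eVariationOn_eq (left_mem_Icc.2 hca) (right_mem_Icc.2 hca))
  have piece₂ : eVariationOn h (Icc a b) = ENNReal.ofReal (h b - h a) := by
    simpa using (distPowDiff_monotoneOn_Icc hq0.le).eVariationOn_eq (left_mem_Icc.2 hab)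
      (right_mem_Icc.2 hab)
  have piece₃ : eVariationOn h (Icc b e) = ENNReal.ofReal (h b - h e) := by
    simpa using ((distPowDiff_antitoneOn_Ici hq0.le hq1 hab).mono Icc_subset_Ici_self
      |>.eVariationOn_eq (left_mem_Icc.2 hbe) (right_mem_Icc.2 hbe))
  calc eVariationOn h (Icc c e)
      = ENNReal.ofReal (h c - h a) + ENNReal.ofReal (h b - h a) + ENNReal.ofReal (h b - h e) := by
        rw [← split (hca.trans hab) hbe, ← split hca hab, piece₁, piece₂, piece₃]
    _ ≤ ENNReal.ofReal ((b - a) ^ q) + ENNReal.ofReal (2 * (b - a) ^ q)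
          + ENNReal.ofReal ((b - a) ^ q) := by
        gcongr <;> linarith
    _ = ENNReal.ofReal (4 * (b - a) ^ q) := by
        rw [← ENNReal.ofReal_add hδ (by positivity), ← ENNReal.ofReal_add (by positivity) hδ]
        ring_nf

end distPowDiff

theorem sum_sum_rpow_le_of_sum_abs_le {ι κ : Type*} [Fintype ι] [Fintype κ] {p K : ℝ}
    (hp : 1 ≤ p) (hK : 0 ≤ K) (Δ : ι → κ → ℝ) {w : ι → ℝ} (hw : ∀ i, 0 ≤ w i)
    (hrow : ∀ i, ∑ j, |Δ i j| ≤ K * w i ^ (1 / p)) :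
    ∑ i, ∑ j, |Δ i j| ^ p ≤ K ^ p * ∑ i, w i := by
  rw [Finset.mul_sum]
  refine Finset.sum_le_sum fun i _ => ?_
  calc ∑ j, |Δ i j| ^ p ≤ (∑ j, |Δ i j|) ^ p :=
        Real.sum_rpow_le_rpow_sum _ hp fun j _ => abs_nonneg _
    _ ≤ (K * w i ^ (1 / p)) ^ p := by gcongr; exact hrow i
    _ = K ^ p * w i := by
        rw [mul_rpow hK (by have := hw i; positivity), ← rpow_mul (hw i),
          one_div_mul_cancel (by linarith), rpow_one]

noncomputable def fbmCovariance (H s t : ℝ) : ℝ :=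
  (s ^ (2 * H) + t ^ (2 * H) - |s - t| ^ (2 * H)) / 2

theorem fbmCovariance_rect (H a b x y : ℝ) :
    fbmCovariance H b y - fbmCovariance H b x - fbmCovariance H a y + fbmCovariance H a x
      = (distPowDiff (2 * H) a b y - distPowDiff (2 * H) a b x) / 2 := by
  simp only [fbmCovariance, distPowDiff, abs_sub_comm a, abs_sub_comm b]
  ring

theorem sum_abs_fbmCovariance_rect_le {H : ℝ} (hH0 : 0 < H) (hH : H ≤ 1 / 2) {a b : ℝ}
    (ha : 0 ≤ a) (hab : a ≤ b) (hb : b ≤ 1) {m : ℕ} {u : Fin (m + 1) → ℝ} (hu : Monotone u)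
    (hu01 : ∀ j, u j ∈ Icc 0 1) :
    ∑ j : Fin m, |fbmCovariance H b (u j.succ) - fbmCovariance H b (u j.castSucc)
      - fbmCovariance H a (u j.succ) + fbmCovariance H a (u j.castSucc)|
        ≤ 2 * (b - a) ^ (2 * H) := by
  simp_rw [fbmCovariance_rect, abs_div, abs_two, ← Finset.sum_div]
  have := sum_abs_sub_le_of_eVariationOn_le (by positivity)
    (eVariationOn_distPowDiff_le (q := 2 * H) (by positivity) (by linarith) ha hab hb) hu hu01
  linarith

/-- The covariance `R_H(s,t) = (s^{2H} + t^{2H} - |s-t|^{2H})/2` of fractional Brownian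
motion with Hurst parameter `H ∈ (0, 1/2]` has finite 2-dimensional `1/(2H)`-variation
on `[0,1]²`. -/
theorem fbm_covariance_finite_variation (H : ℝ) (hH0 : 0 < H) (hH : H ≤ 1 / 2) :
    ∃ C : ℝ, ∀ (n m : ℕ) (t : Fin (n + 1) → ℝ) (u : Fin (m + 1) → ℝ),
      Monotone t → t 0 = 0 → t (Fin.last n) = 1 →
      Monotone u → u 0 = 0 → u (Fin.last m) = 1 →
      (let R : ℝ → ℝ → ℝ := fun s t => (s ^ (2 * H) + t ^ (2 * H) - |s - t| ^ (2 * H)) / 2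
       ∑ i : Fin n, ∑ j : Fin m,
        |R (t i.succ) (u j.succ) - R (t i.succ) (u j.castSucc)
          - R (t i.castSucc) (u j.succ) + R (t i.castSucc) (u j.castSucc)|
            ^ (1 / (2 * H))) ≤ C := by
  have hp : 1 ≤ 1 / (2 * H) := by rw [le_div_iff₀ (by positivity)]; linarith
  have mem_unit {k : ℕ} {v : Fin (k + 1) → ℝ} (hv : Monotone v) (h0 : v 0 = 0)
      (h1 : v (Fin.last k) = 1) (j : Fin (k + 1)) : v j ∈ Icc 0 1 :=
    ⟨h0 ▸ hv (Fin.zero_le j), h1 ▸ hv (Fin.le_last j)⟩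
  refine ⟨2 ^ (1 / (2 * H)), fun n m t u ht ht0 ht1 hu hu0 hu1 => ?_⟩
  have row (i : Fin n) := sum_abs_fbmCovariance_rect_le hH0 hH (mem_unit ht ht0 ht1 i.castSucc).1
    (ht i.castSucc_le_succ) (mem_unit ht ht0 ht1 i.succ).2 hu (mem_unit hu hu0 hu1)
  rw [← one_div_one_div (2 * H)] at row
  calc _ ≤ 2 ^ (1 / (2 * H)) * ∑ i : Fin n, (t i.succ - t i.castSucc) :=
        sum_sum_rpow_le_of_sum_abs_le hp zero_le_two _
          (fun i => sub_nonneg.2 (ht i.castSucc_le_succ)) row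
    _ = 2 ^ (1 / (2 * H)) := by rw [Fin.sum_succ_sub_castSucc, ht1, ht0, sub_zero, mul_one]
end

section
/- Let h : [0,1] → ℝ² be continuous and α ≠ 0 such that h₂ satisfies α h₂(t) = ½(∫₀^t h₁(s)ds − ∫_t^1 h₁(s)ds) and α h₁(t) = −½(∫₀^t h₂(s)ds − ∫_t^1 h₂(s)ds). Then h is continuously differentiable, satisfies h'(t) = (1/α) M h(t) with M = [[0,−1],[1,0]], and h(1) + h(0) = 0; consequently if h is not identically zero then α = ±(π(2n+1))^{−1}/2·2, i.e., 1/α ∈ {π(2n+1) : n ∈ ℤ}. -/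
open Real intervalIntegral Set

/-!
Up to constants, the right-hand sides are `2 ∫₀ᵗ hᵢ - ∫₀¹ hᵢ`, so the fundamental theorem of
calculus turns the integral equations into the rotation system `h' = α⁻¹ M h`, and comparing them
at `t = 0` and `t = 1` gives `h 1 = -h 0`. The solution is `h t = R(t/α) (h 0)` with `R(θ)` the
rotation by `θ`; for `h 0 ≠ 0` the identity `R(1/α) (h 0) = -h 0` forces `cos (1/α) = -1`.
-/

theorem hasDerivWithinAt_integral_of_continuousOn_Icc {E : Type*} [NormedAddCommGroup E]
    [NormedSpace ℝ E] [CompleteSpace E] {f : ℝ → E} {a b t : ℝ}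
    (hf : ContinuousOn f (Icc a b)) (ht : t ∈ Icc a b) :
    HasDerivWithinAt (fun u => ∫ s in a..u, f s) (f t) (Icc a b) t := by
  have : Fact (t ∈ Icc a b) := ⟨ht⟩
  exact integral_hasDerivWithinAt_right
    (hf.mono (uIcc_subset_Icc (left_mem_Icc.2 (ht.1.trans ht.2)) ht)).intervalIntegrable
    (hf.stronglyMeasurableAtFilter_nhdsWithin measurableSet_Icc t) (hf t ht)

theorem constant_of_hasDerivWithinAt_Icc_zero {E : Type*} [NormedAddCommGroup E]
    [NormedSpace ℝ E] {φ : ℝ → E} {a b : ℝ}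
    (hφ : ∀ t ∈ Icc a b, HasDerivWithinAt φ 0 (Icc a b) t) : ∀ t ∈ Icc a b, φ t = φ a :=
  constant_of_has_deriv_right_zero (fun t ht => (hφ t ht).continuousWithinAt) fun t ht =>
    (hφ t (Ico_subset_Icc_self ht)).mono_of_mem_nhdsWithin (Icc_mem_nhdsGE_of_mem ht)

section IntegralEquation

variable {f g : ℝ → ℝ} {a b α c : ℝ}

theorem integral_sub_integral_eq_two_mul_sub (hf : ContinuousOn f (Icc a b)) {t : ℝ}
    (ht : t ∈ Icc a b) :
    (∫ s in a..t, f s) - ∫ s in t..b, f s = 2 * (∫ s in a..t, f s) - ∫ s in a..b, f s := by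
  have hab := ht.1.trans ht.2
  rw [← integral_add_adjacent_intervals
    (hf.mono (uIcc_subset_Icc (left_mem_Icc.2 hab) ht)).intervalIntegrable
    (hf.mono (uIcc_subset_Icc ht (right_mem_Icc.2 hab))).intervalIntegrable]
  ring

theorem hasDerivWithinAt_of_mul_eq_integral_sub_integral (hf : ContinuousOn f (Icc a b))
    (hα : α ≠ 0) (hg : ∀ t ∈ Icc a b, α * g t = c * ((∫ s in a..t, f s) - ∫ s in t..b, f s))
    {t : ℝ} (ht : t ∈ Icc a b) :
    HasDerivWithinAt g (2 * c / α * f t) (Icc a b) t := by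
  have hg_eq : ∀ u ∈ Icc a b,
      g u = 2 * c / α * (∫ s in a..u, f s) - c / α * ∫ s in a..b, f s := by
    intro u hu
    have e := hg u hu
    rw [integral_sub_integral_eq_two_mul_sub hf hu] at e
    field_simp
    linear_combination e
  exact (((hasDerivWithinAt_integral_of_continuousOn_Icc hf ht).const_mul _).sub_const _).congr
    hg_eq (hg_eq t ht)

theorem add_eq_zero_of_mul_eq_integral_sub_integral (hab : a ≤ b) (hα : α ≠ 0)
    (hg : ∀ t ∈ Icc a b, α * g t = c * ((∫ s in a..t, f s) - ∫ s in t..b, f s)) :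
    g b + g a = 0 := by
  have ha := hg a (left_mem_Icc.2 hab)
  have hb := hg b (right_mem_Icc.2 hab)
  simp only [integral_same] at ha hb
  exact mul_left_cancel₀ hα (by linear_combination hb + ha)

end IntegralEquation

theorem rotation_system_solution {f g : ℝ → ℝ} {a b β : ℝ}
    (hf : ∀ t ∈ Icc a b, HasDerivWithinAt f (-β * g t) (Icc a b) t)
    (hg : ∀ t ∈ Icc a b, HasDerivWithinAt g (β * f t) (Icc a b) t) {t : ℝ} (ht : t ∈ Icc a b) :
    f t = f a * cos (β * (t - a)) - g a * sin (β * (t - a)) ∧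
      g t = f a * sin (β * (t - a)) + g a * cos (β * (t - a)) := by
  have hθ : ∀ x, HasDerivAt (fun x => β * (x - a)) β x := fun x => by
    simpa using ((hasDerivAt_id x).sub_const a).const_mul β
  -- `(f, g)` rotated back by `β (t - a)` has zero derivative.
  have hu := constant_of_hasDerivWithinAt_Icc_zero
    (φ := fun x => f x * cos (β * (x - a)) + g x * sin (β * (x - a))) (fun x hx =>
      (((hf x hx).fun_mul (hθ x).cos.hasDerivWithinAt).fun_add
        ((hg x hx).fun_mul (hθ x).sin.hasDerivWithinAt)).congr_deriv (by ring)) t ht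
  have hv := constant_of_hasDerivWithinAt_Icc_zero
    (φ := fun x => g x * cos (β * (x - a)) - f x * sin (β * (x - a))) (fun x hx =>
      (((hg x hx).fun_mul (hθ x).cos.hasDerivWithinAt).fun_sub
        ((hf x hx).fun_mul (hθ x).sin.hasDerivWithinAt)).congr_deriv (by ring)) t ht
  simp only [sub_self, mul_zero, cos_zero, sin_zero, mul_one] at hu hv
  have hpyth := sin_sq_add_cos_sq (β * (t - a))
  constructor
  · linear_combination cos (β * (t - a)) * hu - sin (β * (t - a)) * hv - f t * hpyth
  · linear_combination sin (β * (t - a)) * hu + cos (β * (t - a)) * hv - g t * hpyth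

theorem exists_int_eq_pi_mul_of_rotation_eq_neg {A B β : ℝ} (hAB : A ≠ 0 ∨ B ≠ 0)
    (h₁ : A * cos β - B * sin β = -A) (h₂ : A * sin β + B * cos β = -B) :
    ∃ n : ℤ, β = π * (2 * n + 1) := by
  have hpos : 0 < A ^ 2 + B ^ 2 := by
    rcases hAB with hA | hB <;> positivity
  have hcos : cos β = -1 := by
    have h : (A ^ 2 + B ^ 2) * (cos β + 1) = 0 := by linear_combination A * h₁ + B * h₂
    linarith [(mul_eq_zero.mp h).resolve_left hpos.ne']
  obtain ⟨n, hn⟩ := cos_eq_neg_one_iff.mp hcos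
  exact ⟨n, by rw [← hn]; ring⟩

/-- Eigenvalue problem for the Lévy kernel operator: if `h = (h₁,h₂)` is continuous on `[0,1]`,
`α ≠ 0`, and `α h₂(t) = ½(∫₀ᵗ h₁ − ∫ₜ¹ h₁)`, `α h₁(t) = −½(∫₀ᵗ h₂ − ∫ₜ¹ h₂)`, then `h` is
continuously differentiable with `h' = (1/α) M h`, `M = [[0,−1],[1,0]]`, satisfies
`h(1) + h(0) = 0`, and if `h` is not identically zero on `[0,1]` then
`1/α ∈ {π(2n+1) : n ∈ ℤ}`. -/
theorem levy_kernel_eigenvalue_ode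
    (h₁ h₂ : ℝ → ℝ)
    (hc₁ : ContinuousOn h₁ (Set.Icc 0 1)) (hc₂ : ContinuousOn h₂ (Set.Icc 0 1))
    (α : ℝ) (hα : α ≠ 0)
    (heq₂ : ∀ t ∈ Set.Icc (0:ℝ) 1,
      α * h₂ t = (1 / 2) * ((∫ s in (0:ℝ)..t, h₁ s) - ∫ s in t..(1:ℝ), h₁ s))
    (heq₁ : ∀ t ∈ Set.Icc (0:ℝ) 1,
      α * h₁ t = -(1 / 2) * ((∫ s in (0:ℝ)..t, h₂ s) - ∫ s in t..(1:ℝ), h₂ s)) :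
    (∀ t ∈ Set.Icc (0:ℝ) 1,
      HasDerivWithinAt h₁ (-(1 / α) * h₂ t) (Set.Icc 0 1) t ∧
      HasDerivWithinAt h₂ ((1 / α) * h₁ t) (Set.Icc 0 1) t) ∧
    (h₁ 1 + h₁ 0 = 0 ∧ h₂ 1 + h₂ 0 = 0) ∧
    ((¬ ∀ t ∈ Set.Icc (0:ℝ) 1, h₁ t = 0 ∧ h₂ t = 0) →
      ∃ n : ℤ, 1 / α = Real.pi * (2 * (n : ℝ) + 1)) := by
  have hd₁ : ∀ t ∈ Icc (0:ℝ) 1, HasDerivWithinAt h₁ (-(1 / α) * h₂ t) (Icc 0 1) t :=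
    fun t ht => by
      convert hasDerivWithinAt_of_mul_eq_integral_sub_integral hc₂ hα heq₁ ht using 1
      ring
  have hd₂ : ∀ t ∈ Icc (0:ℝ) 1, HasDerivWithinAt h₂ (1 / α * h₁ t) (Icc 0 1) t :=
    fun t ht => by
      convert hasDerivWithinAt_of_mul_eq_integral_sub_integral hc₁ hα heq₂ ht using 1
      ring
  have hb₁ := add_eq_zero_of_mul_eq_integral_sub_integral zero_le_one hα heq₁
  have hb₂ := add_eq_zero_of_mul_eq_integral_sub_integral zero_le_one hα heq₂
  refine ⟨fun t ht => ⟨hd₁ t ht, hd₂ t ht⟩, ⟨hb₁, hb₂⟩, fun hnz => ?_⟩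
  have hsol := fun t (ht : t ∈ Icc (0:ℝ) 1) => rotation_system_solution hd₁ hd₂ ht
  obtain ⟨hsol₁, hsol₂⟩ := hsol 1 (right_mem_Icc.2 zero_le_one)
  simp only [sub_zero, mul_one] at hsol₁ hsol₂
  refine exists_int_eq_pi_mul_of_rotation_eq_neg (A := h₁ 0) (B := h₂ 0) ?_
    (by linear_combination hb₁ - hsol₁) (by linear_combination hb₂ - hsol₂)
  contrapose! hnz
  intro t ht
  obtain ⟨e₁, e₂⟩ := hsol t ht
  simp [e₁, e₂, hnz.1, hnz.2]
end
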